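/- Let 𝒜 be a Hom-finite Krull-Schmidt triangulated k-category with Serre functor F, let d ∈ ℤ, and set G := [−d]∘F. Then the map sending a finite ⟨G⟩-orbit 𝒪_M of an indecomposable M in Ind(𝒜) to the direct sum ⊕_{X ∈ 𝒪_M} X = M ⊕ G(M) ⊕ ⋯ ⊕ G^{o(G_M)−1}(M) is a one-to-one correspondence between the set of finite ⟨G⟩-orbits of Ind(𝒜) and the set of isomorphism classes of minimal d-th Calabi-Yau objects of 𝒜. -/

import Mathlib

open CategoryTheory CategoryTheory.Limits CategoryTheory.Pretriangulated

universe v u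

namespace CYPaper

variable (k : Type u) [Field k]
variable (C : Type u) [Category.{v} C] [Preadditive C] [Linear k C]
  [HasZeroObject C] [HasShift C ℤ] [∀ n : ℤ, (shiftFunctor C n).Additive]
  [Pretriangulated C]

/-- `X` is a `d`-th Calabi-Yau object: there is an isomorphism
`Hom(X,-) ≅ D Hom(-, X⟦d⟧)`, natural in the variable. -/
def IsCYObj (d : ℤ) (X : C) : Prop :=
  ¬ IsZero X ∧
    ∃ η : ∀ Z : C, (X ⟶ Z) ≃ₗ[k] Module.Dual k (Z ⟶ X⟦d⟧),
      ∀ {Z W : C} (f : Z ⟶ W) (u : X ⟶ Z) (w : W ⟶ X⟦d⟧),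
        η W (u ≫ f) w = η Z u (f ≫ w)

variable {C}

/-- A biproduct decomposition `X ≅ A ⊕ B`, expressed without assuming
the existence of biproducts. -/
def IsDecomp (X A B : C) : Prop :=
  ∃ (iA : A ⟶ X) (iB : B ⟶ X) (pA : X ⟶ A) (pB : X ⟶ B),
    iA ≫ pA = 𝟙 A ∧ iB ≫ pB = 𝟙 B ∧ iA ≫ pB = 0 ∧ iB ≫ pA = 0 ∧
      pA ≫ iA + pB ≫ iB = 𝟙 X

/-- A direct sum decomposition `X ≅ X₁ ⊕ ⋯ ⊕ X_r`. -/
def IsDirectSumDecomp (X : C) {r : ℕ} (Xs : Fin r → C) : Prop :=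
  ∃ (ι : ∀ j, Xs j ⟶ X) (π : ∀ j, X ⟶ Xs j),
    (∀ j, ι j ≫ π j = 𝟙 (Xs j)) ∧ (∀ j j', j ≠ j' → ι j ≫ π j' = 0) ∧
      (∑ j, π j ≫ ι j) = 𝟙 X

/-- An object is indecomposable if it is non-zero and admits no non-trivial
direct sum decomposition. -/
def Indec (X : C) : Prop :=
  ¬ IsZero X ∧ ∀ A B : C, IsDecomp X A B → IsZero A ∨ IsZero B

variable (C) in
/-- The category is Krull-Schmidt: Hom-finite and any indecomposable object has
local endomorphism ring. -/
def KrullSchmidt : Prop :=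
  ∀ X : C, Indec X → IsLocalRing (End X)

/-- Auslander-Reiten triangle. -/
def IsARTriangle (T : Triangle C) : Prop :=
  (T ∈ distTriang C) ∧ Indec T.obj₁ ∧ Indec T.obj₃ ∧ T.mor₃ ≠ 0 ∧
    ∀ (Z' : C) (t : Z' ⟶ T.obj₃),
      (¬ ∃ s : T.obj₃ ⟶ Z', s ≫ t = 𝟙 T.obj₃) → ∃ t' : Z' ⟶ T.obj₂, t = t' ≫ T.mor₂

variable (C) in
/-- A right Serre functor on a Hom-finite `k`-linear category. -/
structure RightSerre where
  F : C ⥤ C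
  additive : F.Additive
  linear : F.Linear k
  η : ∀ A B : C, (A ⟶ B) ≃ₗ[k] Module.Dual k (B ⟶ F.obj A)
  nat_right : ∀ {A B B' : C} (g : B ⟶ B') (u : A ⟶ B) (w : B' ⟶ F.obj A),
    η A B' (u ≫ g) w = η A B u (g ≫ w)
  nat_left : ∀ {A A' B : C} (f : A' ⟶ A) (u : A ⟶ B) (w : B ⟶ F.obj A'),
    η A' B (f ≫ u) w = η A B u (w ≫ F.map f)

variable (C) in
/-- A Serre functor: a right Serre functor which is an equivalence. -/
structure Serre extends RightSerre k C where
  isEquiv : F.IsEquivalence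

/-- A minimal `d`-th Calabi-Yau object: a `d`-th CY object no proper direct
summand of which is a `d`-th CY object. -/
def IsMinCYObj (d : ℤ) (X : C) : Prop :=
  IsCYObj k C d X ∧
    ∀ A B : C, IsDecomp X A B → ¬ IsZero B → ¬ IsCYObj k C d A

end CYPaper

open CategoryTheory CategoryTheory.Limits CategoryTheory.Pretriangulated CYPaper

namespace CYPaper

variable {k : Type u} [Field k]
variable {C : Type u} [Category.{v} C] [Preadditive C] [Linear k C]
  [HasZeroObject C] [HasShift C ℤ] [∀ n : ℤ, (shiftFunctor C n).Additive]
  [Pretriangulated C]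

/-- The object-level action of `G := [-d] ∘ F`. -/
def Gobj (S : Serre k C) (d : ℤ) (X : C) : C := (S.F.obj X)⟦-d⟧

/-- Iterates of `G` on objects. -/
def Gpow (S : Serre k C) (d : ℤ) : ℕ → C → C
  | 0, X => X
  | n + 1, X => Gobj S d (Gpow S d n X)

/-- `M` has a finite `⟨G⟩`-orbit. -/
def FiniteGOrbit (S : Serre k C) (d : ℤ) (M : C) : Prop :=
  ∃ r : ℕ, 0 < r ∧ Nonempty (Gpow S d r M ≅ M)

/-- The relative order `o(G_M)` of `G` with respect to `M`. -/
noncomputable def oG (S : Serre k C) (d : ℤ) (M : C) : ℕ :=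
  sInf {r : ℕ | 0 < r ∧ Nonempty (Gpow S d r M ≅ M)}

/-- `M` and `M'` lie in the same `⟨G⟩`-orbit. -/
def SameGOrbit (S : Serre k C) (d : ℤ) (M M' : C) : Prop :=
  ∃ j : ℕ, Nonempty (Gpow S d j M ≅ M')

/-- The orbit sum `M ⊕ G(M) ⊕ ⋯ ⊕ G^{o(G_M)-1}(M)`. -/
noncomputable def orbitSum [HasFiniteBiproducts C] (S : Serre k C) (d : ℤ) (M : C) : C :=
  ⨁ (fun j : Fin (oG S d M) => Gpow S d (j : ℕ) M)

end CYPaper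

/-!
Serre duality identifies the `d`-th Calabi-Yau objects with the nonzero objects `X` such that
`G X ≅ X`: both `X⟦d⟧` and `F X` represent the functor `D Hom(X, -)`, and such a representing
object is unique. Indeed, a natural nondegenerate pairing `Hom(X, Z) × Hom(Z, A) → k` is
`(u, w) ↦ λ (u ≫ w)` for a trace form `λ` on `Hom(X, A)`; two trace forms pull back to each other
along morphisms `A ⟶ A'` and `A' ⟶ A`, which nondegeneracy forces to be mutually inverse.

The orbit sum is `G`-stable since `G` permutes its summands cyclically. Everything else is
Krull-Schmidt theory. A minimal Calabi-Yau object `X` decomposes into indecomposables and,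
since `G X ≅ X`, the orbit of an indecomposable summand `M` consists of summands of `X`, so it
is finite and the orbit sum of `M` is a Calabi-Yau summand of `X`; by minimality it is all
of `X`. Conversely, a `G`-stable summand of an orbit sum that contains one member of the orbit
contains all of them; as the summands of the orbit sum are pairwise non-isomorphic, no
indecomposable occurs both in a summand and in its complement, so the complement vanishes.
-/

theorem IsIdempotentElem.eq_zero_or_eq_one_of_isLocalRing {R : Type*} [Ring R] [IsLocalRing R]
    {e : R} (he : IsIdempotentElem e) : e = 0 ∨ e = 1 := by
  rcases IsLocalRing.isUnit_or_isUnit_of_isUnit_add (a := e) (b := 1 - e) (by simp) with h | h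
  · exact Or.inr ((IsIdempotentElem.iff_eq_one_of_isUnit h).1 he)
  · exact Or.inl (by simpa using (IsIdempotentElem.iff_eq_one_of_isUnit h).1 he.one_sub)

namespace CYPaper

section Preadditive

variable {C : Type*} [Category C] [Preadditive C]

theorem _root_.CategoryTheory.Retract.isZero {N Y : C} (h : Retract N Y) (hY : IsZero Y) :
    IsZero N :=
  (IsZero.iff_id_eq_zero N).2 (by rw [← h.retract, hY.eq_of_src h.r 0, Limits.comp_zero])

theorem _root_.CategoryTheory.Retract.isIso_i_of_isLocalRing {N Y : C} (h : Retract N Y)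
    [IsLocalRing (End Y)] (hN : ¬ IsZero N) : IsIso h.i := by
  have hidem : IsIdempotentElem (show End Y from h.r ≫ h.i) := by
    change (h.r ≫ h.i) ≫ h.r ≫ h.i = h.r ≫ h.i
    simp
  rcases hidem.eq_zero_or_eq_one_of_isLocalRing with h0 | h1
  · refine absurd ((IsZero.iff_id_eq_zero N).2 ?_) hN
    have h0 : h.r ≫ h.i = 0 := h0
    calc 𝟙 N = h.i ≫ (h.r ≫ h.i) ≫ h.r := by simp
      _ = 0 := by simp [h0]
  · exact ⟨h.r, h.retract, h1⟩

theorem IsDecomp.map {D : Type*} [Category D] [Preadditive D] (F : C ⥤ D) [F.Additive]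
    {X A B : C} (h : IsDecomp X A B) : IsDecomp (F.obj X) (F.obj A) (F.obj B) := by
  obtain ⟨iA, iB, pA, pB, h₁, h₂, h₃, h₄, h₅⟩ := h
  refine ⟨F.map iA, F.map iB, F.map pA, F.map pB, ?_, ?_, ?_, ?_, ?_⟩ <;>
    simp only [← F.map_comp, ← F.map_add, h₁, h₂, h₃, h₄, h₅, F.map_id, F.map_zero]

theorem IsDecomp.of_iso {X X' A B : C} (h : IsDecomp X A B) (e : X ≅ X') : IsDecomp X' A B := by
  obtain ⟨iA, iB, pA, pB, h₁, h₂, h₃, h₄, h₅⟩ := h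
  refine ⟨iA ≫ e.hom, iB ≫ e.hom, e.inv ≫ pA, e.inv ≫ pB, by simpa using h₁, by simpa using h₂,
    by simpa using h₃, by simpa using h₄, ?_⟩
  have : e.inv ≫ (pA ≫ iA + pB ≫ iB) ≫ e.hom = 𝟙 X' := by simp [h₅]
  simpa [Preadditive.add_comp, Preadditive.comp_add] using this

theorem IsDecomp.nonempty_retract_left {X A B : C} (h : IsDecomp X A B) :
    Nonempty (Retract A X) :=
  have ⟨iA, _, pA, _, h₁, _⟩ := h
  ⟨⟨iA, pA, h₁⟩⟩

theorem IsDecomp.nonempty_retract_right {X A B : C} (h : IsDecomp X A B) :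
    Nonempty (Retract B X) :=
  have ⟨_, iB, _, pB, _, h₂, _⟩ := h
  ⟨⟨iB, pB, h₂⟩⟩

theorem Indec.map_of_isEquivalence {D : Type*} [Category D] [Preadditive D] (F : C ⥤ D)
    [F.Additive] [F.IsEquivalence] {X : C} (h : Indec X) : Indec (F.obj X) := by
  let E := F.asEquivalence
  have : E.functor.Additive := inferInstanceAs F.Additive
  refine ⟨fun hz => h.1 ((E.inverse.map_isZero hz).of_iso (E.unitIso.app X)), fun A B hd => ?_⟩
  have hd' : IsDecomp X (E.inverse.obj A) (E.inverse.obj B) :=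
    (hd.map E.inverse).of_iso (E.unitIso.app X).symm
  exact (h.2 _ _ hd').imp (fun hz => (F.map_isZero hz).of_iso (E.counitIso.app A).symm)
    (fun hz => (F.map_isZero hz).of_iso (E.counitIso.app B).symm)

end Preadditive

section Biproducts

variable {C : Type*} [Category C] [Preadditive C] [HasFiniteBiproducts C]

attribute [local instance] hasBinaryBiproducts_of_finite_biproducts

theorem isZero_biproduct_of_isEmpty {ι : Type} [Fintype ι] [IsEmpty ι] (f : ι → C) :
    IsZero (⨁ f) :=
  (IsZero.iff_id_eq_zero _).2 (biproduct.hom_ext' _ _ fun i => isEmptyElim i)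

noncomputable def retractBiproduct {ι : Type} [Fintype ι] (f : ι → C) (i : ι) :
    Retract (f i) (⨁ f) :=
  ⟨biproduct.ι f i, biproduct.π f i, by simp⟩

@[simps]
noncomputable def biproductSumIso {ι κ : Type} [Fintype ι] [Fintype κ] (f : ι ⊕ κ → C) :
    ⨁ f ≅ (⨁ fun i => f (.inl i)) ⊞ (⨁ fun j => f (.inr j)) where
  hom := biprod.lift (biproduct.lift fun i => biproduct.π f (.inl i))
    (biproduct.lift fun j => biproduct.π f (.inr j))
  inv := biprod.desc (biproduct.desc fun i => biproduct.ι f (.inl i))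
    (biproduct.desc fun j => biproduct.ι f (.inr j))
  hom_inv_id := by
    rw [biprod.lift_desc, biproduct.lift_desc, biproduct.lift_desc, ← biproduct.total,
      Fintype.sum_sum_type]
  inv_hom_id := by
    ext i j
    all_goals first
      | simp; done
      | rcases eq_or_ne i j with rfl | h <;> simp [*]

noncomputable def biproductSubtypeIso {ι : Type} [Fintype ι] (f : ι → C) (P : ι → Prop)
    [DecidablePred P] :
    ⨁ f ≅ (⨁ fun i : {i // P i} => f i) ⊞ (⨁ fun i : {i // ¬ P i} => f i) :=
  (biproduct.whiskerEquiv (Equiv.sumCompl P) fun _ => Iso.refl _).symm ≪≫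
    biproductSumIso (f ∘ Equiv.sumCompl P)

@[simps]
noncomputable def biproductEraseIso {ι : Type} [Fintype ι] [DecidableEq ι] (f : ι → C)
    (i : ι) : ⨁ f ≅ f i ⊞ ⨁ fun j : {j // j ≠ i} => f j where
  hom := biprod.lift (biproduct.π f i) (biproduct.lift fun j => biproduct.π f j)
  inv := biprod.desc (biproduct.ι f i) (biproduct.desc fun j => biproduct.ι f j)
  hom_inv_id := by
    rw [biprod.lift_desc, biproduct.lift_desc, ← biproduct.total,
      Fintype.sum_eq_add_sum_subtype_ne _ i]
  inv_hom_id := by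
    ext j j'
    · simp
    · simp [biproduct.ι_π_ne _ (Ne.symm j.2)]
    · simp [biproduct.ι_π_ne _ j.2]
    · by_cases h : j = j'
      · subst h; simp
      · simp [biproduct.ι_π_ne _ h, biproduct.ι_π_ne _ (Subtype.coe_injective.ne h)]

theorem isDecomp_iff_nonempty_iso_biprod {X A B : C} :
    IsDecomp X A B ↔ Nonempty (X ≅ A ⊞ B) := by
  constructor
  · rintro ⟨iA, iB, pA, pB, h₁, h₂, h₃, h₄, h₅⟩
    exact ⟨⟨biprod.lift pA pB, biprod.desc iA iB, by simp [h₅], by ext <;> simp [h₁, h₂, h₃, h₄]⟩⟩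
  · rintro ⟨e⟩
    refine ⟨biprod.inl ≫ e.inv, biprod.inr ≫ e.inv, e.hom ≫ biprod.fst, e.hom ≫ biprod.snd,
      by simp, by simp, by simp, by simp, ?_⟩
    simp only [Category.assoc, ← Preadditive.comp_add]
    rw [← Category.assoc biprod.fst, ← Category.assoc biprod.snd, ← Preadditive.add_comp,
      biprod.total]
    simp

theorem KrullSchmidt.exists_isIso_i_comp_π (hKS : KrullSchmidt C) {ι : Type} [Fintype ι]
    {N : C} {f : ι → C} (hN : Indec N) (hf : ∀ i, Indec (f i)) (h : Retract N (⨁ f)) :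
    ∃ i, IsIso (h.i ≫ biproduct.π f i) := by
  have := hKS N hN
  have hsum : ∑ i, (show End N from h.i ≫ biproduct.π f i ≫ biproduct.ι f i ≫ h.r) = 1 := by
    change ∑ i, h.i ≫ biproduct.π f i ≫ biproduct.ι f i ≫ h.r = 𝟙 N
    simp_rw [← Category.assoc, ← Preadditive.sum_comp, Category.assoc, ← Preadditive.comp_sum,
      biproduct.total, Category.comp_id, h.retract]
  obtain ⟨i, -, u, hu⟩ := IsLocalRing.exists_of_isUnit_sum (hsum ▸ isUnit_one)
  have hret : (h.i ≫ biproduct.π f i) ≫ biproduct.ι f i ≫ h.r ≫ (↑u⁻¹ : End N) = 𝟙 N :=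
    calc _ = (↑u : End N) ≫ (↑u⁻¹ : End N) := by rw [hu]; simp
      _ = 𝟙 N := u.inv_mul
  have := hKS _ (hf i)
  exact ⟨i, (Retract.mk _ _ hret).isIso_i_of_isLocalRing hN.1⟩

theorem KrullSchmidt.exists_iso_of_retract (hKS : KrullSchmidt C) {ι : Type} [Fintype ι]
    {N X : C} {f : ι → C} (hN : Indec N) (hf : ∀ i, Indec (f i)) (h : Retract N X)
    (e : X ≅ ⨁ f) : ∃ i, Nonempty (N ≅ f i) := by
  obtain ⟨i, _⟩ := hKS.exists_isIso_i_comp_π hN hf (h.trans (Retract.ofIso e))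
  exact ⟨i, ⟨asIso ((h.trans (Retract.ofIso e)).i ≫ biproduct.π f i)⟩⟩

theorem KrullSchmidt.exists_equiv_of_iso (hKS : KrullSchmidt C) {ι κ : Type} [Fintype ι]
    [Fintype κ] {f : ι → C} {g : κ → C} (hf : ∀ i, Indec (f i)) (hg : ∀ j, Indec (g j))
    (e : ⨁ f ≅ ⨁ g) : ∃ σ : ι ≃ κ, ∀ i, Nonempty (f i ≅ g (σ i)) := by
  classical
  induction hn : Fintype.card ι generalizing ι κ with
  | zero =>
    have : IsEmpty ι := Fintype.card_eq_zero_iff.1 hn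
    have hz := (isZero_biproduct_of_isEmpty f).of_iso e.symm
    have : IsEmpty κ := ⟨fun j => (hg j).1 ((retractBiproduct g j).isZero hz)⟩
    exact ⟨Equiv.equivOfIsEmpty ι κ, isEmptyElim⟩
  | succ n ih =>
    obtain ⟨i₀⟩ : Nonempty ι := Fintype.card_pos_iff.1 (by omega)
    obtain ⟨l, hl⟩ := hKS.exists_isIso_i_comp_π (hf i₀) hg
      ((retractBiproduct f i₀).trans (Retract.ofIso e))
    replace hl : IsIso (biproduct.ι f i₀ ≫ e.hom ≫ biproduct.π g l) := by
      simpa [retractBiproduct, Retract.ofIso] using hl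
    -- the component `f i₀ ⟶ g l` of `e` is invertible, so Gaussian elimination cancels it
    let φ := (biproductEraseIso f i₀).symm ≪≫ e ≪≫ biproductEraseIso g l
    have : IsIso (biprod.inl ≫ φ.hom ≫ biprod.fst) := by simpa [φ] using hl
    obtain ⟨σ, hσ⟩ := ih (f := fun i : {i // i ≠ i₀} => f i) (g := fun j : {j // j ≠ l} => g j)
      (fun i => hf i) (fun j => hg j) (Biprod.isoElim φ) (by simp [hn])
    refine ⟨(Equiv.optionSubtypeNe i₀).symm.trans (σ.optionCongr.trans (Equiv.optionSubtypeNe l)),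
      fun i => ?_⟩
    rcases eq_or_ne i i₀ with rfl | hi
    · simpa using ⟨asIso (biproduct.ι f i ≫ e.hom ≫ biproduct.π g l)⟩
    · simpa [Equiv.optionSubtypeNe_symm_of_ne hi] using hσ ⟨i, hi⟩

end Biproducts

section HomFinite

variable {C : Type*} [Category C] [Preadditive C]

theorem IsDecomp.finrank_end_add_finrank_end_le {k : Type*} [Field k] [Linear k C]
    [∀ X Y : C, FiniteDimensional k (X ⟶ Y)] {X A B : C} (h : IsDecomp X A B) :
    Module.finrank k (A ⟶ A) + Module.finrank k (B ⟶ B) ≤ Module.finrank k (X ⟶ X) := by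
  obtain ⟨iA, iB, pA, pB, h₁, h₂, h₃, h₄, -⟩ := h
  let Ψ : (A ⟶ A) × (B ⟶ B) →ₗ[k] (X ⟶ X) :=
    ((Linear.leftComp k X pA).comp (Linear.rightComp k A iA)).coprod
      ((Linear.leftComp k X pB).comp (Linear.rightComp k B iB))
  have hΨ : Function.LeftInverse (fun φ => (iA ≫ φ ≫ pA, iB ≫ φ ≫ pB)) Ψ := by
    rintro ⟨a, b⟩
    simp [Ψ, h₁, h₂, reassoc_of% h₁, reassoc_of% h₂, reassoc_of% h₃, reassoc_of% h₄]
  simpa using LinearMap.finrank_le_finrank_of_injective hΨ.injective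

theorem finrank_end_pos {k : Type*} [Field k] [Linear k C]
    [∀ X Y : C, FiniteDimensional k (X ⟶ Y)] {X : C} (hX : ¬ IsZero X) :
    0 < Module.finrank k (X ⟶ X) :=
  have : Nontrivial (X ⟶ X) := ⟨⟨𝟙 X, 0, fun h => hX ((IsZero.iff_id_eq_zero X).2 h)⟩⟩
  Module.finrank_pos

variable [HasFiniteBiproducts C]

attribute [local instance] hasBinaryBiproducts_of_finite_biproducts

theorem exists_iso_biproduct_indec (k : Type*) [Field k] [Linear k C]
    [∀ X Y : C, FiniteDimensional k (X ⟶ Y)] (X : C) :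
    ∃ (ι : Type) (_ : Fintype ι) (f : ι → C), (∀ i, Indec (f i)) ∧ Nonempty (X ≅ ⨁ f) := by
  induction hn : Module.finrank k (X ⟶ X) using Nat.strong_induction_on generalizing X with
  | _ n ih =>
  by_cases hz : IsZero X
  · exact ⟨Empty, inferInstance, Empty.elim, nofun, ⟨hz.iso (isZero_biproduct_of_isEmpty _)⟩⟩
  by_cases hi : Indec X
  · exact ⟨Unit, inferInstance, fun _ => X, fun _ => hi,
      ⟨(biproductUniqueIso fun _ : Unit => X).symm⟩⟩
  obtain ⟨A, B, hd, hA, hB⟩ : ∃ A B, IsDecomp X A B ∧ ¬ IsZero A ∧ ¬ IsZero B := by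
    simpa [Indec, hz] using hi
  have := hd.finrank_end_add_finrank_end_le (k := k)
  have := finrank_end_pos (k := k) hA
  have := finrank_end_pos (k := k) hB
  obtain ⟨ιA, _, fA, hfA, ⟨eA⟩⟩ := ih _ (by omega) A rfl
  obtain ⟨ιB, _, fB, hfB, ⟨eB⟩⟩ := ih _ (by omega) B rfl
  obtain ⟨e⟩ := isDecomp_iff_nonempty_iso_biprod.1 hd
  exact ⟨ιA ⊕ ιB, inferInstance, Sum.elim fA fB, by rintro (i | j); exacts [hfA i, hfB j],
    ⟨e ≪≫ biprod.mapIso eA eB ≪≫ (biproductSumIso (Sum.elim fA fB)).symm⟩⟩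

theorem exists_indec_retract (k : Type*) [Field k] [Linear k C]
    [∀ X Y : C, FiniteDimensional k (X ⟶ Y)] {X : C} (hX : ¬ IsZero X) :
    ∃ N, Indec N ∧ Nonempty (Retract N X) := by
  obtain ⟨ι, _, f, hf, ⟨e⟩⟩ := exists_iso_biproduct_indec k X
  rcases isEmpty_or_nonempty ι with hι | ⟨⟨i⟩⟩
  · exact absurd ((isZero_biproduct_of_isEmpty f).of_iso e) hX
  · exact ⟨f i, hf i, ⟨(retractBiproduct f i).trans (Retract.ofIso e.symm)⟩⟩

theorem KrullSchmidt.not_retract_of_isDecomp (hKS : KrullSchmidt C) (k : Type*) [Field k]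
    [Linear k C] [∀ X Y : C, FiniteDimensional k (X ⟶ Y)] {ι : Type} [Fintype ι] {f : ι → C}
    (hf : ∀ i, Indec (f i)) (hinj : ∀ i j, Nonempty (f i ≅ f j) → i = j) {A B L : C}
    (hd : IsDecomp (⨁ f) A B) (hL : Indec L) (hA : Retract L A) (hB : Retract L B) : False := by
  obtain ⟨ιA, _, fA, hfA, ⟨eA⟩⟩ := exists_iso_biproduct_indec k A
  obtain ⟨ιB, _, fB, hfB, ⟨eB⟩⟩ := exists_iso_biproduct_indec k B
  obtain ⟨e⟩ := isDecomp_iff_nonempty_iso_biprod.1 hd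
  obtain ⟨σ, hσ⟩ := hKS.exists_equiv_of_iso hf (g := Sum.elim fA fB)
    (by rintro (i | j); exacts [hfA i, hfB j])
    (e ≪≫ biprod.mapIso eA eB ≪≫ (biproductSumIso (Sum.elim fA fB)).symm)
  obtain ⟨a, ⟨ea⟩⟩ := hKS.exists_iso_of_retract hL hfA hA eA
  obtain ⟨b, ⟨eb⟩⟩ := hKS.exists_iso_of_retract hL hfB hB eB
  obtain ⟨e₁⟩ := hσ (σ.symm (.inl a))
  obtain ⟨e₂⟩ := hσ (σ.symm (.inr b))
  rw [Equiv.apply_symm_apply] at e₁ e₂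
  simpa using hinj _ _ ⟨e₁ ≪≫ ea.symm ≪≫ eb ≪≫ e₂.symm⟩

end HomFinite

section SerreDuality

variable {k : Type*} [Field k] {C : Type*} [Category C] [Preadditive C] [Linear k C]

variable (k) in
/-- `A` plays the role of `F X` for a Serre functor `F`; a `d`-th Calabi-Yau object is a nonzero
`X` with `IsSerreDual k X (X⟦d⟧)`. -/
def IsSerreDual (X A : C) : Prop :=
  ∃ η : ∀ Z : C, (X ⟶ Z) ≃ₗ[k] Module.Dual k (Z ⟶ A),
    ∀ {Z W : C} (f : Z ⟶ W) (u : X ⟶ Z) (w : W ⟶ A), η W (u ≫ f) w = η Z u (f ≫ w)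

theorem IsSerreDual.of_iso {X X' A A' : C} (h : IsSerreDual k X A) (e : X ≅ X') (e' : A ≅ A') :
    IsSerreDual k X' A' := by
  obtain ⟨η, hη⟩ := h
  refine ⟨fun Z => (Linear.homCongr k e.symm (Iso.refl Z)).trans
    ((η Z).trans (Linear.homCongr k (Iso.refl Z) e'.symm).dualMap), ?_⟩
  intro Z W f u w
  simpa [Linear.homCongr_apply] using hη f (e.hom ≫ u) (w ≫ e'.inv)

section Trace

variable {X A : C} {η : ∀ Z : C, (X ⟶ Z) ≃ₗ[k] Module.Dual k (Z ⟶ A)}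

theorem apply_eq_trace_comp
    (hη : ∀ {Z W : C} (f : Z ⟶ W) (u : X ⟶ Z) (w : W ⟶ A), η W (u ≫ f) w = η Z u (f ≫ w))
    {Z : C} (u : X ⟶ Z) (w : Z ⟶ A) : η Z u w = η A (u ≫ w) (𝟙 A) := by
  simpa using (hη w u (𝟙 A)).symm

theorem eq_zero_of_trace_comp_eq_zero
    (hη : ∀ {Z W : C} (f : Z ⟶ W) (u : X ⟶ Z) (w : W ⟶ A), η W (u ≫ f) w = η Z u (f ≫ w))
    {Z : C} {w : Z ⟶ A} (hw : ∀ u : X ⟶ Z, η A (u ≫ w) (𝟙 A) = 0) : w = 0 := by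
  refine (Module.forall_dual_apply_eq_zero_iff k w).1 fun φ => ?_
  obtain ⟨u, rfl⟩ := (η Z).surjective φ
  rw [apply_eq_trace_comp hη, hw]

theorem exists_trace_comp_eq [∀ X Y : C, FiniteDimensional k (X ⟶ Y)]
    (hη : ∀ {Z W : C} (f : Z ⟶ W) (u : X ⟶ Z) (w : W ⟶ A), η W (u ≫ f) w = η Z u (f ≫ w))
    {B : C} (φ : Module.Dual k (X ⟶ B)) : ∃ b : B ⟶ A, ∀ u, φ u = η A (u ≫ b) (𝟙 A) := by
  refine ⟨(Module.evalEquiv k (B ⟶ A)).symm (φ ∘ₗ (η B).symm.toLinearMap), fun u => ?_⟩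
  rw [← apply_eq_trace_comp hη, ← Module.Dual.eval_apply k (B ⟶ A), ← Module.evalEquiv_apply,
    LinearEquiv.apply_symm_apply]
  simp

end Trace

theorem IsSerreDual.nonempty_iso [∀ X Y : C, FiniteDimensional k (X ⟶ Y)] {X A A' : C}
    (h : IsSerreDual k X A) (h' : IsSerreDual k X A') : Nonempty (A ≅ A') := by
  obtain ⟨η, hη⟩ := h
  obtain ⟨η', hη'⟩ := h'
  obtain ⟨b, hb⟩ := exists_trace_comp_eq hη' ((Module.Dual.eval k _ (𝟙 A)) ∘ₗ (η A).toLinearMap)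
  obtain ⟨b', hb'⟩ :=
    exists_trace_comp_eq hη ((Module.Dual.eval k _ (𝟙 A')) ∘ₗ (η' A').toLinearMap)
  simp only [LinearMap.comp_apply, Module.Dual.eval_apply, LinearEquiv.coe_coe] at hb hb'
  refine ⟨⟨b, b', ?_, ?_⟩⟩
  · rw [← sub_eq_zero]
    refine eq_zero_of_trace_comp_eq_zero hη fun u => ?_
    rw [Preadditive.comp_sub, map_sub, LinearMap.sub_apply, ← Category.assoc, ← hb', ← hb,
      Category.comp_id, sub_self]
  · rw [← sub_eq_zero]
    refine eq_zero_of_trace_comp_eq_zero hη' fun v => ?_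
    rw [Preadditive.comp_sub, map_sub, LinearMap.sub_apply, ← Category.assoc, ← hb, ← hb',
      Category.comp_id, sub_self]

end SerreDuality

variable {k : Type u} [Field k] {C : Type u} [Category.{v} C] [Preadditive C] [Linear k C]

theorem Serre.isSerreDual (S : Serre k C) (X : C) : IsSerreDual k X (S.F.obj X) :=
  ⟨S.η X, fun f u w => S.nat_right f u w⟩

variable [HasShift C ℤ]

theorem IsCYObj.of_iso {d : ℤ} {X Y : C} (h : IsCYObj k C d X) (e : X ≅ Y) :
    IsCYObj k C d Y :=
  ⟨fun hY => h.1 (hY.of_iso e), IsSerreDual.of_iso h.2 e ((shiftFunctor C d).mapIso e)⟩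

def Serre.G (S : Serre k C) (d : ℤ) : C ⥤ C := S.F ⋙ shiftFunctor C (-d)

instance (S : Serre k C) (d : ℤ) [∀ n : ℤ, (shiftFunctor C n).Additive] : (S.G d).Additive :=
  have := S.additive
  inferInstanceAs (S.F ⋙ shiftFunctor C (-d)).Additive

instance (S : Serre k C) (d : ℤ) : (S.G d).IsEquivalence :=
  have := S.isEquiv
  inferInstanceAs (S.F ⋙ shiftFunctor C (-d)).IsEquivalence

theorem isCYObj_iff_nonempty_iso_Gobj [∀ X Y : C, FiniteDimensional k (X ⟶ Y)]
    (S : Serre k C) (d : ℤ) (X : C) :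
    IsCYObj k C d X ↔ ¬ IsZero X ∧ Nonempty (Gobj S d X ≅ X) := by
  change ¬ IsZero X ∧ IsSerreDual k X (X⟦d⟧) ↔ _
  refine and_congr_right fun _ => ⟨fun h => ?_, fun ⟨e⟩ => ?_⟩
  · obtain ⟨e⟩ := h.nonempty_iso (S.isSerreDual X)
    exact ⟨(shiftFunctor C (-d)).mapIso e.symm ≪≫ shiftShiftNeg X d⟩
  · exact (S.isSerreDual X).of_iso (Iso.refl X)
      ((shiftNegShift (S.F.obj X) d).symm ≪≫ (shiftFunctor C d).mapIso e)

section Orbit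

variable {S : Serre k C} {d : ℤ} {M : C}

theorem Gpow_add (m n : ℕ) (X : C) : Gpow S d (m + n) X = Gpow S d m (Gpow S d n X) := by
  induction m with
  | zero => rw [Nat.zero_add]; rfl
  | succ m ih => rw [Nat.succ_add]; exact congrArg (Gobj S d) ih

theorem Gpow_congr (n : ℕ) {X Y : C} (e : X ≅ Y) : Nonempty (Gpow S d n X ≅ Gpow S d n Y) := by
  induction n with
  | zero => exact ⟨e⟩
  | succ n ih => exact ⟨(S.G d).mapIso ih.some⟩

theorem Gpow_cancel (n : ℕ) {X Y : C} (e : Gpow S d n X ≅ Gpow S d n Y) : Nonempty (X ≅ Y) := by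
  induction n with
  | zero => exact ⟨e⟩
  | succ n ih => exact ih ((S.G d).preimageIso e)

theorem Indec.Gpow [∀ n : ℤ, (shiftFunctor C n).Additive] {X : C} (h : Indec X) (n : ℕ) :
    Indec (Gpow S d n X) := by
  induction n with
  | zero => exact h
  | succ n ih => exact ih.map_of_isEquivalence (S.G d)

theorem retract_Gpow_of_iso_Gobj {N A : C} (hA : Gobj S d A ≅ A) (h : Retract N A) (n : ℕ) :
    Nonempty (Retract (Gpow S d n N) A) := by
  induction n with
  | zero => exact ⟨h⟩
  | succ n ih => exact ⟨(ih.some.map (S.G d)).trans (Retract.ofIso hA)⟩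

theorem FiniteGOrbit.oG_spec (hf : FiniteGOrbit S d M) :
    0 < oG S d M ∧ Nonempty (Gpow S d (oG S d M) M ≅ M) :=
  Nat.sInf_mem hf

theorem FiniteGOrbit.Gpow_mod (hf : FiniteGOrbit S d M) (n : ℕ) :
    Nonempty (Gpow S d n M ≅ Gpow S d (n % oG S d M) M) := by
  obtain ⟨hr, ⟨e⟩⟩ := hf.oG_spec
  induction n using Nat.strong_induction_on with
  | _ n ih =>
  rcases lt_or_ge n (oG S d M) with hn | hn
  · rw [Nat.mod_eq_of_lt hn]
    exact ⟨Iso.refl _⟩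
  · obtain ⟨e'⟩ := ih (n - oG S d M) (by omega)
    have : Gpow S d n M = Gpow S d (n - oG S d M) (Gpow S d (oG S d M) M) := by
      rw [← Gpow_add, Nat.sub_add_cancel hn]
    rw [this, Nat.mod_eq_sub_mod hn]
    exact ⟨(Gpow_congr _ e).some ≪≫ e'⟩

theorem finiteGOrbit_of_forall_exists_iso {ι : Type} [Finite ι] (f : ι → C)
    (h : ∀ n, ∃ i, Nonempty (Gpow S d n M ≅ f i)) : FiniteGOrbit S d M := by
  choose g hg using h
  obtain ⟨m, n, hmn, hg'⟩ := Finite.exists_ne_map_eq_of_infinite g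
  wlog hlt : m < n generalizing m n
  · exact this n m hmn.symm hg'.symm (by omega)
  have : Gpow S d n M = Gpow S d m (Gpow S d (n - m) M) := by
    rw [← Gpow_add, Nat.add_sub_cancel' hlt.le]
  obtain ⟨e⟩ := Gpow_cancel m
    ((hg m).some ≪≫ eqToIso (congrArg f hg') ≪≫ (hg n).some.symm ≪≫ eqToIso this)
  exact ⟨n - m, by omega, ⟨e.symm⟩⟩

theorem not_nonempty_iso_Gpow_of_lt {i j : ℕ} (hij : i < j) (hj : j < oG S d M) :
    ¬ Nonempty (Gpow S d i M ≅ Gpow S d j M) := by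
  rintro ⟨e⟩
  rw [← Nat.sub_add_cancel hij.le, Nat.add_comm, Gpow_add] at e
  obtain ⟨e'⟩ := Gpow_cancel i e
  have := Nat.sInf_le (s := {r : ℕ | 0 < r ∧ Nonempty (Gpow S d r M ≅ M)})
    ⟨Nat.sub_pos_of_lt hij, ⟨e'.symm⟩⟩
  exact absurd this (by unfold oG at hj; omega)

theorem eq_of_nonempty_iso_Gpow {i j : Fin (oG S d M)}
    (h : Nonempty (Gpow S d i M ≅ Gpow S d j M)) : i = j := by
  rcases lt_trichotomy (i : ℕ) j with hij | hij | hij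
  · exact absurd h (not_nonempty_iso_Gpow_of_lt hij j.2)
  · exact Fin.ext hij
  · exact absurd ⟨h.some.symm⟩ (not_nonempty_iso_Gpow_of_lt hij i.2)

theorem oG_eq_of_iso_Gpow {M' : C} {j : ℕ} (e : M' ≅ Gpow S d j M) : oG S d M' = oG S d M := by
  suffices h : ∀ n, Nonempty (Gpow S d n M' ≅ M') ↔ Nonempty (Gpow S d n M ≅ M) by
    simp only [oG, h]
  intro n
  obtain ⟨e'⟩ := Gpow_congr (S := S) (d := d) n e
  rw [← Gpow_add, Nat.add_comm, Gpow_add] at e'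
  constructor
  · rintro ⟨f⟩
    exact Gpow_cancel j (e'.symm ≪≫ f ≪≫ e)
  · rintro ⟨f⟩
    exact ⟨e' ≪≫ (Gpow_congr j f).some ≪≫ e.symm⟩

theorem FiniteGOrbit.sameGOrbit_of_iso_Gpow {M' : C} (hf : FiniteGOrbit S d M') {i : ℕ}
    (e : M ≅ Gpow S d i M') : SameGOrbit S d M M' := by
  obtain ⟨hr, -⟩ := hf.oG_spec
  have hi : i ≤ oG S d M' * i := Nat.le_mul_of_pos_left i hr
  obtain ⟨e'⟩ := Gpow_congr (S := S) (d := d) (oG S d M' * i - i) e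
  rw [← Gpow_add, Nat.sub_add_cancel hi] at e'
  obtain ⟨e''⟩ := hf.Gpow_mod (oG S d M' * i)
  rw [Nat.mul_mod_right] at e''
  exact ⟨_, ⟨e' ≪≫ e''⟩⟩

end Orbit

section OrbitSum

variable [HasFiniteBiproducts C] {S : Serre k C} {d : ℤ} {M : C}

attribute [local instance] hasBinaryBiproducts_of_finite_biproducts

theorem FiniteGOrbit.nonempty_retract_orbitSum (hf : FiniteGOrbit S d M) :
    Nonempty (Retract M (orbitSum S d M)) :=
  ⟨retractBiproduct (fun j : Fin (oG S d M) => Gpow S d j M) ⟨0, hf.oG_spec.1⟩⟩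

theorem FiniteGOrbit.nonempty_biproduct_Gpow_add_iso (hf : FiniteGOrbit S d M) (t : ℕ) :
    Nonempty ((⨁ fun i : Fin (oG S d M) => Gpow S d (i + t) M) ≅ orbitSum S d M) := by
  have : NeZero (oG S d M) := ⟨hf.oG_spec.1.ne'⟩
  have w : ∀ i : Fin (oG S d M),
      Nonempty (Gpow S d (i + Fin.ofNat _ t : Fin _) M ≅ Gpow S d (i + t) M) := fun i => by
    rw [Fin.val_add, Fin.val_ofNat, Nat.add_mod_mod]
    exact ⟨(hf.Gpow_mod _).some.symm⟩
  exact ⟨biproduct.whiskerEquiv (Equiv.addRight (Fin.ofNat _ t)) fun i => (w i).some⟩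

theorem FiniteGOrbit.nonempty_orbitSum_iso (hf : FiniteGOrbit S d M) {M' : C}
    (h : SameGOrbit S d M M') : Nonempty (orbitSum S d M ≅ orbitSum S d M') := by
  obtain ⟨j, ⟨e⟩⟩ := h
  have hr : oG S d M' = oG S d M := oG_eq_of_iso_Gpow e.symm
  have w : ∀ i : Fin (oG S d M'), Nonempty (Gpow S d i M' ≅ Gpow S d (i + j) M) := fun i => by
    rw [Gpow_add]
    exact Gpow_congr _ e.symm
  obtain ⟨e'⟩ := hf.nonempty_biproduct_Gpow_add_iso j
  exact ⟨e'.symm ≪≫ (biproduct.whiskerEquiv (finCongr hr) fun i => (w i).some.symm).symm⟩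

variable [∀ n : ℤ, (shiftFunctor C n).Additive]

theorem FiniteGOrbit.nonempty_Gobj_orbitSum_iso (hf : FiniteGOrbit S d M) :
    Nonempty (Gobj S d (orbitSum S d M) ≅ orbitSum S d M) :=
  have ⟨e⟩ := hf.nonempty_biproduct_Gpow_add_iso 1
  ⟨(S.G d).mapBiproduct _ ≪≫ e⟩

theorem FiniteGOrbit.sameGOrbit_of_nonempty_orbitSum_iso (hKS : KrullSchmidt C)
    {M' : C} (hf : FiniteGOrbit S d M) (hf' : FiniteGOrbit S d M') (hM : Indec M)
    (hM' : Indec M') (e : orbitSum S d M ≅ orbitSum S d M') : SameGOrbit S d M M' := by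
  obtain ⟨i, ⟨e'⟩⟩ := hKS.exists_iso_of_retract hM (fun i : Fin (oG S d M') => hM'.Gpow i)
    (hf.nonempty_retract_orbitSum.some.trans (Retract.ofIso e)) (Iso.refl _)
  exact hf'.sameGOrbit_of_iso_Gpow e'

variable [∀ X Y : C, FiniteDimensional k (X ⟶ Y)]

theorem FiniteGOrbit.isCYObj_orbitSum (hf : FiniteGOrbit S d M) (hM : Indec M) :
    IsCYObj k C d (orbitSum S d M) :=
  (isCYObj_iff_nonempty_iso_Gobj S d _).2
    ⟨fun h => hM.1 (hf.nonempty_retract_orbitSum.some.isZero h), hf.nonempty_Gobj_orbitSum_iso⟩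

theorem FiniteGOrbit.isMinCYObj_orbitSum (hKS : KrullSchmidt C) (hf : FiniteGOrbit S d M)
    (hM : Indec M) : IsMinCYObj k d (orbitSum S d M) := by
  refine ⟨hf.isCYObj_orbitSum hM, fun A B hd hB hA => ?_⟩
  obtain ⟨hA0, ⟨eA⟩⟩ := (isCYObj_iff_nonempty_iso_Gobj S d A).1 hA
  have hind : ∀ i : Fin (oG S d M), Indec (Gpow S d i M) := fun i => hM.Gpow i
  obtain ⟨N, hN, ⟨rN⟩⟩ := exists_indec_retract k hA0
  obtain ⟨L, hL, ⟨rL⟩⟩ := exists_indec_retract k hB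
  obtain ⟨a, ⟨ea⟩⟩ := hKS.exists_iso_of_retract hN hind
    (rN.trans hd.nonempty_retract_left.some) (Iso.refl _)
  obtain ⟨b, ⟨eb⟩⟩ := hKS.exists_iso_of_retract hL hind
    (rL.trans hd.nonempty_retract_right.some) (Iso.refl _)
  -- `G^b M ≅ L` lies in `B`, and also in `A`, being `G^n N` for `n + a = oG S d M + b`
  obtain ⟨rA⟩ := retract_Gpow_of_iso_Gobj eA rN (oG S d M - a + b)
  obtain ⟨e₁⟩ := Gpow_congr (S := S) (d := d) (oG S d M - a + b) ea
  rw [← Gpow_add] at e₁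
  obtain ⟨e₂⟩ := hf.Gpow_mod (oG S d M - a + b + a)
  have hmod : (oG S d M - a + b + a) % oG S d M = b := by
    rw [show oG S d M - a + b + a = b + oG S d M by omega, Nat.add_mod_right, Nat.mod_eq_of_lt b.2]
  rw [hmod] at e₂
  exact hKS.not_retract_of_isDecomp k hind (fun _ _ => eq_of_nonempty_iso_Gpow) hd (hM.Gpow b)
    ((Retract.ofIso (e₁ ≪≫ e₂).symm).trans rA) ((Retract.ofIso eb.symm).trans rL)

theorem IsMinCYObj.exists_nonempty_iso_orbitSum (hKS : KrullSchmidt C) {X : C}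
    (hX : IsMinCYObj k d X) :
    ∃ M, Indec M ∧ FiniteGOrbit S d M ∧ Nonempty (X ≅ orbitSum S d M) := by
  classical
  obtain ⟨hX0, ⟨eX⟩⟩ := (isCYObj_iff_nonempty_iso_Gobj S d X).1 hX.1
  obtain ⟨ι, _, f, hf, ⟨e⟩⟩ := exists_iso_biproduct_indec k X
  obtain ⟨M, hM, ⟨rM⟩⟩ := exists_indec_retract k hX0
  have hg := fun n => hKS.exists_iso_of_retract (hM.Gpow n) hf
    (retract_Gpow_of_iso_Gobj eX rM n).some e
  have hfM : FiniteGOrbit S d M := finiteGOrbit_of_forall_exists_iso f hg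
  choose g hg using hg
  have hinj : Function.Injective fun i : Fin (oG S d M) => g i := fun i j hij =>
    eq_of_nonempty_iso_Gpow ⟨(hg i).some ≪≫ eqToIso (congrArg f hij) ≪≫ (hg j).some.symm⟩
  let P := fun i => i ∈ Set.range fun j : Fin (oG S d M) => g j
  have hd : IsDecomp X (⨁ fun i : {i // P i} => f i) (⨁ fun i : {i // ¬ P i} => f i) :=
    isDecomp_iff_nonempty_iso_biprod.2 ⟨e ≪≫ biproductSubtypeIso f P⟩
  let eA : orbitSum S d M ≅ ⨁ fun i : {i // P i} => f i :=
    biproduct.whiskerEquiv (Equiv.ofInjective _ hinj) fun j => (hg j).some.symm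
  have hB : IsZero (⨁ fun i : {i // ¬ P i} => f i) :=
    by_contra fun hB => hX.2 _ _ hd hB ((hfM.isCYObj_orbitSum hM).of_iso eA)
  exact ⟨M, hM, hfM, ⟨(isDecomp_iff_nonempty_iso_biprod.1 hd).some ≪≫ (isoBiprodZero hB).symm ≪≫
    eA.symm⟩⟩

end OrbitSum

end CYPaper

/-- **Statement 9** (Theorem 4.2 (ii)). Let `𝒜` be a Hom-finite Krull-Schmidt
triangulated `k`-category with Serre functor `F`, `d ∈ ℤ` and `G := [-d] ∘ F`. Then
`𝒪_M ↦ ⊕_{X ∈ 𝒪_M} X = M ⊕ G(M) ⊕ ⋯ ⊕ G^{o(G_M)-1}(M)` is a one-to-one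
correspondence between the finite `⟨G⟩`-orbits of `Ind(𝒜)` and the isomorphism
classes of minimal `d`-th Calabi-Yau objects: it is constant on orbits, it sends
orbits of indecomposables with finite orbit to minimal `d`-th CY objects, it is
injective on orbits, and every minimal `d`-th CY object arises this way. -/
theorem stmt_9 (k : Type u) [Field k] (C : Type u) [Category.{v} C] [Preadditive C]
    [Linear k C] [HasZeroObject C] [HasShift C ℤ]
    [∀ n : ℤ, (shiftFunctor C n).Additive] [Pretriangulated C]
    [HasFiniteBiproducts C]
    [∀ X Y : C, FiniteDimensional k (X ⟶ Y)]
    (hKS : KrullSchmidt C) (S : Serre k C) (d : ℤ) :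
    -- the map is well defined on isomorphism classes of orbits
    (∀ M M' : C, Indec M → Indec M' → FiniteGOrbit S d M → FiniteGOrbit S d M' →
      SameGOrbit S d M M' → Nonempty (orbitSum S d M ≅ orbitSum S d M')) ∧
    -- it takes values in minimal d-th CY objects
    (∀ M : C, Indec M → FiniteGOrbit S d M → IsMinCYObj k d (orbitSum S d M)) ∧
    -- it is injective
    (∀ M M' : C, Indec M → Indec M' → FiniteGOrbit S d M → FiniteGOrbit S d M' →
      Nonempty (orbitSum S d M ≅ orbitSum S d M') → SameGOrbit S d M M') ∧
    -- it is surjective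
    (∀ X : C, IsMinCYObj k d X →
      ∃ M : C, Indec M ∧ FiniteGOrbit S d M ∧ Nonempty (X ≅ orbitSum S d M)) :=
  ⟨fun _ _ _ _ hf _ h => hf.nonempty_orbitSum_iso h,
    fun _ hM hf => hf.isMinCYObj_orbitSum hKS hM,
    fun _ _ hM hM' hf hf' ⟨e⟩ => hf.sameGOrbit_of_nonempty_orbitSum_iso hKS hf' hM hM' e,
    fun _ hX => hX.exists_nonempty_iso_orbitSum hKS⟩
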